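/- arXiv:2205.12820 — 2 statements merged into one kernel-verified Lean document; each statement's English description precedes it below -/
import Mathlib

section
/- For all real numbers a, b with |a| ≤ b, one has b − |a| ≤ arcosh(cosh b / cosh a) ≤ b − |a| + log 2. -/
/-!
Write `c = |a|` and `d = b - |a| ≥ 0`, so that `cosh b / cosh a = cosh (d + c) / cosh c`.
The addition formula gives `cosh d ≤ cosh (d + c) / cosh c ≤ exp d`, and `arcosh` is monotone
with `arcosh (cosh d) = d` and `arcosh t ≤ log (2 t)`.
-/

open Real

noncomputable def arcosh (t : ℝ) : ℝ := Real.log (t + Real.sqrt (t ^ 2 - 1))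

namespace Real

theorem arcosh_le_log_two_mul {t : ℝ} (ht : 0 < t) : arcosh t ≤ log (2 * t) := by
  have hsqrt : √(t ^ 2 - 1) ≤ t := (sqrt_le_left ht.le).mpr (by linarith)
  exact log_le_log (by positivity) (by linarith)

theorem cosh_mul_cosh_le_cosh_add {x y : ℝ} (hx : 0 ≤ x) (hy : 0 ≤ y) :
    cosh x * cosh y ≤ cosh (x + y) := by
  rw [cosh_add]
  have := mul_nonneg (sinh_nonneg_iff.mpr hx) (sinh_nonneg_iff.mpr hy)
  linarith

theorem cosh_add_le_exp_mul_cosh {x : ℝ} (hx : 0 ≤ x) (y : ℝ) :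
    cosh (x + y) ≤ exp x * cosh y := by
  have hexp : exp (-(x + y)) ≤ exp (x - y) := exp_le_exp.mpr (by linarith)
  rw [cosh_eq, cosh_eq, mul_div_assoc', mul_add, ← exp_add, ← exp_add]
  gcongr
  linarith

end Real

theorem arcosh_cosh_div_cosh_bounds (a b : ℝ) (hab : |a| ≤ b) :
    b - |a| ≤ _root_.arcosh (Real.cosh b / Real.cosh a) ∧
    _root_.arcosh (Real.cosh b / Real.cosh a) ≤ b - |a| + Real.log 2 := by
  change b - |a| ≤ Real.arcosh _ ∧ Real.arcosh _ ≤ _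
  obtain ⟨d, hd, rfl⟩ : ∃ d, 0 ≤ d ∧ b = d + |a| := ⟨b - |a|, by linarith, by ring⟩
  rw [← cosh_abs a, add_sub_cancel_right]
  have hcosh : 0 < cosh |a| := cosh_pos _
  have hlower : cosh d ≤ cosh (d + |a|) / cosh |a| :=
    (le_div_iff₀ hcosh).mpr (cosh_mul_cosh_le_cosh_add hd (abs_nonneg a))
  have hupper : cosh (d + |a|) / cosh |a| ≤ exp d :=
    (div_le_iff₀ hcosh).mpr (cosh_add_le_exp_mul_cosh hd |a|)
  have hpos : 0 < cosh (d + |a|) / cosh |a| := (cosh_pos d).trans_le hlower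
  constructor
  · calc d = Real.arcosh (cosh d) := (arcosh_cosh hd).symm
      _ ≤ _ := (arcosh_le_arcosh (cosh_pos d) hpos).mpr hlower
  · calc Real.arcosh (cosh (d + |a|) / cosh |a|) ≤ log (2 * (cosh (d + |a|) / cosh |a|)) :=
          arcosh_le_log_two_mul hpos
      _ ≤ log (2 * exp d) := by gcongr
      _ = d + log 2 := by rw [log_mul two_ne_zero (exp_pos d).ne', log_exp, add_comm]
end

section
/- Fix an integer d ≥ 3 and let ω_{d−1} > 0 be a constant. For s ≥ 0 define g_R(s) = e^{−(d−2)R} · ω_{d−1} · ∫_0^{arcosh(cosh R / cosh s)} sinh^{d−2}(u) du, for R ≥ s. Then for every fixed s ≥ 0, g_R(s) converges, as R → ∞, to (ω_{d−1} / ((d−2) 2^{d−2})) · cosh^{−(d−2)}(s). -/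
/-!
With `n = d - 2` and `T = arcosh (cosh R / cosh s)`, the quantity factors as
`ω · (∫₀ᵀ sinhⁿ u du) / (eᵀ/2)ⁿ · (e^(T-R)/2)ⁿ`.
Since `0 ≤ (eᵘ/2)ⁿ - sinhⁿ u ≤ n (eᵘ/2)ⁿ⁻¹ / 2`, the integral is `(eᵀ/2)ⁿ / n` up to an error
`O(T (eᵀ/2)ⁿ⁻¹)`, so the first ratio tends to `1 / n`. For the second,
`e^(arcosh t) = t + √(t² - 1) ∼ 2t` and `e^(-R) t → 1 / (2 cosh s)` for `t = cosh R / cosh s`.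
-/

open Real Filter intervalIntegral

open scoped Topology

theorem arcosh_eq_real_arcosh : _root_.arcosh = Real.arcosh := rfl

namespace Real

theorem exp_div_two_sub_sinh (u : ℝ) : exp u / 2 - sinh u = exp (-u) / 2 := by
  rw [sinh_eq]; ring

theorem sinh_le_exp_div_two (u : ℝ) : sinh u ≤ exp u / 2 := by
  linarith [exp_div_two_sub_sinh u, exp_pos (-u)]

theorem sinh_pow_le_exp_div_two_pow {u : ℝ} (hu : 0 ≤ u) (n : ℕ) :
    sinh u ^ n ≤ (exp u / 2) ^ n :=
  pow_le_pow_left₀ (sinh_nonneg_iff.mpr hu) (sinh_le_exp_div_two u) n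

theorem exp_div_two_pow_sub_sinh_pow_le {u : ℝ} (hu : 0 ≤ u) (n : ℕ) :
    (exp u / 2) ^ n - sinh u ^ n ≤ n * (exp u / 2) ^ (n - 1) / 2 := by
  have hsinh : |sinh u| ≤ exp u / 2 := by
    rw [abs_of_nonneg (sinh_nonneg_iff.mpr hu)]; exact sinh_le_exp_div_two u
  have hdiff : |exp u / 2 - sinh u| ≤ 1 / 2 := by
    rw [exp_div_two_sub_sinh, abs_of_pos (by positivity)]
    linarith [exp_le_one_iff.mpr (neg_nonpos.mpr hu)]
  calc (exp u / 2) ^ n - sinh u ^ n ≤ |(exp u / 2) ^ n - sinh u ^ n| := le_abs_self _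
    _ ≤ |exp u / 2 - sinh u| * n * max |exp u / 2| |sinh u| ^ (n - 1) := abs_pow_sub_pow_le ..
    _ ≤ 1 / 2 * n * (exp u / 2) ^ (n - 1) := by
      rw [abs_of_pos (by positivity : 0 < exp u / 2), max_eq_left hsinh]
      gcongr
    _ = n * (exp u / 2) ^ (n - 1) / 2 := by ring

theorem integral_exp_div_two_pow {n : ℕ} (hn : n ≠ 0) (T : ℝ) :
    ∫ u in (0:ℝ)..T, (exp u / 2) ^ n = ((exp T / 2) ^ n - (1 / 2) ^ n) / n := by
  have hderiv : ∀ u, HasDerivAt (fun u => (exp u / 2) ^ n / n) ((exp u / 2) ^ n) u := by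
    intro u
    refine ((((hasDerivAt_exp u).div_const 2).pow n).div_const (n : ℝ)).congr_deriv ?_
    have : (n : ℝ) ≠ 0 := Nat.cast_ne_zero.mpr hn
    rw [mul_assoc, ← pow_succ, Nat.sub_add_cancel (Nat.one_le_iff_ne_zero.mpr hn)]
    field_simp
  rw [integral_eq_sub_of_hasDerivAt (fun u _ => hderiv u)
    ((by fun_prop : Continuous fun u => (exp u / 2) ^ n).intervalIntegrable _ _), exp_zero]
  ring

theorem integral_exp_div_two_pow_sub_sinh_pow_nonneg {T : ℝ} (hT : 0 ≤ T) (n : ℕ) :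
    0 ≤ ∫ u in (0:ℝ)..T, ((exp u / 2) ^ n - sinh u ^ n) :=
  integral_nonneg hT fun _ hu => sub_nonneg.mpr (sinh_pow_le_exp_div_two_pow hu.1 n)

theorem integral_exp_div_two_pow_sub_sinh_pow_le {T : ℝ} (hT : 0 ≤ T) (n : ℕ) :
    ∫ u in (0:ℝ)..T, ((exp u / 2) ^ n - sinh u ^ n) ≤ T * (n * (exp T / 2) ^ (n - 1) / 2) := by
  have hbound : ∀ u ∈ Set.Icc 0 T,
      (exp u / 2) ^ n - sinh u ^ n ≤ n * (exp T / 2) ^ (n - 1) / 2 := fun u hu =>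
    (exp_div_two_pow_sub_sinh_pow_le hu.1 n).trans (by gcongr; exact hu.2)
  have := integral_mono_on hT
    ((by fun_prop : Continuous fun u => (exp u / 2) ^ n - sinh u ^ n).intervalIntegrable (μ := MeasureTheory.volume) 0 T)
    intervalIntegrable_const hbound
  rwa [integral_const, smul_eq_mul, sub_zero] at this

theorem tendsto_integral_sinh_pow_div {n : ℕ} (hn : n ≠ 0) :
    Tendsto (fun T => (∫ u in (0:ℝ)..T, sinh u ^ n) / (exp T / 2) ^ n) atTop (𝓝 (1 / n)) := by
  have hx : Tendsto (fun T => exp T / 2) atTop atTop := tendsto_exp_atTop.atTop_div_const two_pos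
  have hxn : Tendsto (fun T => ((exp T / 2) ^ n)⁻¹) atTop (𝓝 0) :=
    ((tendsto_pow_atTop hn).comp hx).inv_tendsto_atTop
  have hmodel : Tendsto (fun T => (∫ u in (0:ℝ)..T, (exp u / 2) ^ n) / (exp T / 2) ^ n) atTop
      (𝓝 (1 / n)) := by
    have hlim : Tendsto (fun T => (1 - (1 / 2) ^ n * ((exp T / 2) ^ n)⁻¹) / n) atTop
        (𝓝 (1 / n)) := by
      have h := ((tendsto_const_nhds (x := (1 : ℝ))).sub
        (hxn.const_mul ((1 / 2) ^ n))).div_const (n : ℝ)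
      rwa [mul_zero, sub_zero] at h
    refine hlim.congr fun T => ?_
    rw [integral_exp_div_two_pow hn]
    field_simp
  have hdefect : Tendsto (fun T => (∫ u in (0:ℝ)..T, ((exp u / 2) ^ n - sinh u ^ n)) /
      (exp T / 2) ^ n) atTop (𝓝 0) := by
    have hupper : Tendsto (fun T => n * (T * exp (-T))) atTop (𝓝 0) := by
      simpa using (tendsto_pow_mul_exp_neg_atTop_nhds_zero 1).const_mul (n : ℝ)
    refine tendsto_of_tendsto_of_tendsto_of_le_of_le' tendsto_const_nhds hupper ?_ ?_
    · filter_upwards [eventually_ge_atTop 0] with T hT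
      exact div_nonneg (integral_exp_div_two_pow_sub_sinh_pow_nonneg hT n) (by positivity)
    · filter_upwards [eventually_ge_atTop 0] with T hT
      rw [div_le_iff₀ (by positivity)]
      refine (integral_exp_div_two_pow_sub_sinh_pow_le hT n).trans_eq ?_
      rw [← pow_sub_one_mul hn, exp_neg]
      field_simp
  have h := hmodel.sub hdefect
  rw [sub_zero] at h
  refine h.congr fun T => ?_
  rw [integral_sub ((by fun_prop : Continuous fun u => (exp u / 2) ^ n).intervalIntegrable _ _)
    ((by fun_prop : Continuous fun u => sinh u ^ n).intervalIntegrable _ _), sub_div,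
    sub_sub_cancel]

theorem tendsto_arcosh_atTop : Tendsto arcosh atTop atTop := by
  refine tendsto_atTop_mono' atTop ?_ tendsto_log_atTop
  filter_upwards [eventually_gt_atTop 0] with x hx
  exact log_le_log hx (le_add_of_nonneg_right (sqrt_nonneg _))

theorem tendsto_cosh_atTop : Tendsto cosh atTop atTop := by
  refine tendsto_atTop_mono (fun x => ?_) (tendsto_exp_atTop.atTop_div_const two_pos)
  rw [cosh_eq]
  linarith [exp_pos (-x)]

theorem tendsto_exp_neg_mul_cosh : Tendsto (fun R => exp (-R) * cosh R) atTop (𝓝 (1 / 2)) := by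
  have h := ((tendsto_exp_neg_atTop_nhds_zero.pow 2).const_add 1).div_const 2
  rw [zero_pow two_ne_zero, add_zero] at h
  refine h.congr fun R => ?_
  rw [cosh_eq, exp_neg]
  field_simp

theorem tendsto_mul_exp_arcosh {α : Type*} {l : Filter α} {c t : α → ℝ} {L : ℝ} (hL : 0 ≤ L)
    (hc : Tendsto c l (𝓝 0)) (hct : Tendsto (fun x => c x * t x) l (𝓝 L))
    (hc0 : ∀ᶠ x in l, 0 ≤ c x) (ht : ∀ᶠ x in l, 1 ≤ t x) :
    Tendsto (fun x => c x * exp (arcosh (t x))) l (𝓝 (2 * L)) := by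
  have h := hct.add ((hct.pow 2).sub (hc.pow 2)).sqrt
  rw [zero_pow two_ne_zero, sub_zero, sqrt_sq hL, ← two_mul] at h
  refine h.congr' ?_
  filter_upwards [hc0, ht] with x hcx htx
  -- `c · e^(arcosh t) = c t + √((c t)² - c²)`
  rw [exp_arcosh htx, mul_add, ← sqrt_sq hcx, ← sqrt_mul (sq_nonneg _), sqrt_sq hcx]
  ring_nf

end Real

theorem g_R_tendsto_general (d : ℕ) (hd : 3 ≤ d) (ω : ℝ) (s : ℝ) :
    Filter.Tendsto
      (fun R : ℝ =>
        Real.exp (-((d : ℝ) - 2) * R) * ω *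
          ∫ u in (0:ℝ).._root_.arcosh (Real.cosh R / Real.cosh s), Real.sinh u ^ (d - 2))
      Filter.atTop
      (nhds (ω / (((d : ℝ) - 2) * 2 ^ (d - 2)) * (Real.cosh s) ^ (-((d : ℝ) - 2)))) := by
  set n := d - 2
  have hn : n ≠ 0 := by omega
  have hdn : (d : ℝ) - 2 = n := by rw [Nat.cast_sub (by omega)]; norm_num
  have hcs : 0 < cosh s := cosh_pos s
  set T := fun R => Real.arcosh (cosh R / cosh s)
  have hT : Tendsto T atTop atTop :=
    tendsto_arcosh_atTop.comp (tendsto_cosh_atTop.atTop_div_const hcs)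
  have hexpT : Tendsto (fun R => exp (-R) * exp (T R)) atTop (𝓝 (2 * (1 / 2 / cosh s))) := by
    refine tendsto_mul_exp_arcosh (by positivity) tendsto_exp_neg_atTop_nhds_zero ?_
      (.of_forall fun R => (exp_pos _).le) ?_
    · simpa only [mul_div_assoc] using tendsto_exp_neg_mul_cosh.div_const (cosh s)
    · filter_upwards [eventually_ge_atTop |s|] with R hR
      exact (one_le_div hcs).mpr (cosh_le_cosh.mpr (hR.trans (le_abs_self R)))
  have h := ((tendsto_integral_sinh_pow_div hn).comp hT).mul ((hexpT.div_const 2).pow n)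
  have hlim : ω * (1 / n * (2 * (1 / 2 / cosh s) / 2) ^ n) =
      ω / (((d : ℝ) - 2) * 2 ^ n) * cosh s ^ (-((d : ℝ) - 2)) := by
    rw [hdn, rpow_neg hcs.le, rpow_natCast]
    field_simp
    rw [div_pow, mul_pow, one_pow]
    field_simp
  rw [← hlim]
  refine (h.const_mul ω).congr fun R => ?_
  have hexp : exp (-((d : ℝ) - 2) * R) = exp (-R) ^ n := by
    rw [hdn, neg_mul, ← mul_neg, exp_nat_mul]
  simp only [Function.comp_apply, hexp, arcosh_eq_real_arcosh, T, div_pow, mul_pow]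
  field_simp

theorem g_R_tendsto (d : ℕ) (hd : 3 ≤ d) (ω : ℝ) (hω : 0 < ω) (s : ℝ) (hs : 0 ≤ s) :
    Filter.Tendsto
      (fun R : ℝ =>
        Real.exp (-((d : ℝ) - 2) * R) * ω *
          ∫ u in (0:ℝ).._root_.arcosh (Real.cosh R / Real.cosh s), Real.sinh u ^ (d - 2))
      Filter.atTop
      (nhds (ω / (((d : ℝ) - 2) * 2 ^ (d - 2)) * (Real.cosh s) ^ (-((d : ℝ) - 2)))) :=
  g_R_tendsto_general d hd ω s
end
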